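/- arXiv:1401.1381 — 2 statements merged into one kernel-verified Lean document; each statement's English description precedes it below -/
import Mathlib

section
/- The first four columns of the equivalent channel matrix of the 3D MIMO code are orthogonal to its ninth through twelfth columns: ⟨h_j,h_k⟩ = 0 for all j ∈ {1,2,3,4} and k ∈ {9,10,11,12} (for every channel matrix H ∈ ℂ^{2×4}). -/
noncomputable section

open scoped InnerProductSpace

namespace MIMO3D

/-- The Golden-code parameter θ = (1+√5)/2. -/
def goldenTheta : ℝ := (1 + Real.sqrt 5) / 2

/-- θ̄ = 1 − θ. -/
def goldenThetaBar : ℝ := 1 - goldenTheta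

/-- α = 1 + i(1−θ). -/
def alpha : ℂ := 1 + Complex.I * (1 - (goldenTheta : ℂ))

/-- ᾱ = 1 + i(1−θ̄). -/
def alphaBar : ℂ := 1 + Complex.I * (1 - (goldenThetaBar : ℂ))

/-- The 3D MIMO codeword matrix X(s), a 4×4 complex matrix built from the
eight information symbols s₁,…,s₈ (here 0-indexed as `s 0`,…,`s 7`). -/
def codeword (s : Fin 8 → ℂ) : Matrix (Fin 4) (Fin 4) ℂ :=
  ((Real.sqrt 5 : ℂ))⁻¹ •
  !![alpha * (s 0 + (goldenTheta : ℂ) * s 1),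
     alpha * (s 2 + (goldenTheta : ℂ) * s 3),
     -(starRingEnd ℂ alpha) * (starRingEnd ℂ (s 4) + (goldenTheta : ℂ) * starRingEnd ℂ (s 5)),
     -(starRingEnd ℂ alpha) * (starRingEnd ℂ (s 6) + (goldenTheta : ℂ) * starRingEnd ℂ (s 7));
     Complex.I * alphaBar * (s 2 + (goldenThetaBar : ℂ) * s 3),
     alphaBar * (s 0 + (goldenThetaBar : ℂ) * s 1),
     Complex.I * (starRingEnd ℂ alphaBar) * (starRingEnd ℂ (s 6) + (goldenThetaBar : ℂ) * starRingEnd ℂ (s 7)),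
     -(starRingEnd ℂ alphaBar) * (starRingEnd ℂ (s 4) + (goldenThetaBar : ℂ) * starRingEnd ℂ (s 5));
     alpha * (s 4 + (goldenTheta : ℂ) * s 5),
     alpha * (s 6 + (goldenTheta : ℂ) * s 7),
     (starRingEnd ℂ alpha) * (starRingEnd ℂ (s 0) + (goldenTheta : ℂ) * starRingEnd ℂ (s 1)),
     (starRingEnd ℂ alpha) * (starRingEnd ℂ (s 2) + (goldenTheta : ℂ) * starRingEnd ℂ (s 3));
     Complex.I * alphaBar * (s 6 + (goldenThetaBar : ℂ) * s 7),
     alphaBar * (s 4 + (goldenThetaBar : ℂ) * s 5),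
     -(Complex.I * (starRingEnd ℂ alphaBar) * (starRingEnd ℂ (s 2) + (goldenThetaBar : ℂ) * starRingEnd ℂ (s 3))),
     (starRingEnd ℂ alphaBar) * (starRingEnd ℂ (s 0) + (goldenThetaBar : ℂ) * starRingEnd ℂ (s 1))]

/-- ṽ(Y): stack the columns of the 2×4 complex matrix Y into ℂ^8
(giving (Y₁₁,Y₂₁,Y₁₂,Y₂₂,Y₁₃,Y₂₃,Y₁₄,Y₂₄)) and replace each complex entry z
by the pair (Re z, Im z), producing a vector of ℝ^16 (Euclidean space). -/
def tildeVec (Y : Matrix (Fin 2) (Fin 4) ℂ) : EuclideanSpace ℝ (Fin 16) :=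
  WithLp.toLp 2 fun m : Fin 16 =>
    if m.val % 2 = 0 then
      (Y ⟨m.val % 4 / 2, by omega⟩ ⟨m.val / 4, by have := m.isLt; omega⟩).re
    else
      (Y ⟨m.val % 4 / 2, by omega⟩ ⟨m.val / 4, by have := m.isLt; omega⟩).im

/-- Recover the complex symbol vector s ∈ ℂ^8 from its real coordinate vector
s̃ = (Re s₁, Im s₁, …, Re s₈, Im s₈) ∈ ℝ^16. -/
def sOfReal (v : Fin 16 → ℝ) : Fin 8 → ℂ :=
  fun k => (v ⟨2 * k.val, by have := k.isLt; omega⟩ : ℂ)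
    + (v ⟨2 * k.val + 1, by have := k.isLt; omega⟩ : ℂ) * Complex.I

/-- The j-th column h_j (0-indexed: `hcol H j` is h_{j+1} of the paper) of the
equivalent channel matrix H_eq: the image of the j-th standard basis vector of
ℝ^16 under the ℝ-linear map s̃ ↦ ṽ(H · X(s)). -/
def hcol (H : Matrix (Fin 2) (Fin 4) ℂ) (j : Fin 16) : EuclideanSpace ℝ (Fin 16) :=
  tildeVec (H * codeword (sOfReal (Pi.single j 1)))

/-- The Gram–Schmidt residual r_j (0-indexed) of the columns of H_eq:
r_j = h_j − Σ_{k<j} ⟨q_k, h_j⟩ q_k. -/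
def rvec (H : Matrix (Fin 2) (Fin 4) ℂ) (j : Fin 16) : EuclideanSpace ℝ (Fin 16) :=
  have : WellFoundedLT (Fin 16) := inferInstance
  InnerProductSpace.gramSchmidt ℝ (hcol H) j

/-- The Gram–Schmidt orthonormalization q_j = r_j / ‖r_j‖ (0-indexed). -/
def qvec (H : Matrix (Fin 2) (Fin 4) ℂ) (j : Fin 16) : EuclideanSpace ℝ (Fin 16) :=
  have : WellFoundedLT (Fin 16) := inferInstance
  InnerProductSpace.gramSchmidtNormed ℝ (hcol H) j

/-!
Under the real coordinates, `⟪ṽ(A), ṽ(B)⟫ = Re tr (A Bᴴ)`. The columns h₁,…,h₄ are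
`ṽ(H X)` for codewords `X` carrying only `s₁, s₂`, which are diagonal `diag(u, v, ū, v̄)`;
the columns h₉,…,h₁₂ come from codewords `Y` carrying only `s₅, s₆`, which are block
anti-diagonal. For these shapes `X Yᴴ` is skew-Hermitian, hence so is `H X Yᴴ Hᴴ`, and the
trace of a skew-Hermitian matrix is purely imaginary.
-/

open Matrix

lemma inner_tildeVec (A B : Matrix (Fin 2) (Fin 4) ℂ) :
    ⟪tildeVec A, tildeVec B⟫_ℝ = (trace (A * Bᴴ)).re := by
  simp only [PiLp.inner_apply, tildeVec, RCLike.inner_apply, conj_trivial, Fin.sum_univ_succ,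
    Fin.sum_univ_zero]
  simp [trace, mul_apply, Fin.sum_univ_four, Fin.sum_univ_two]
  ring

lemma re_trace_eq_zero_of_conjTranspose_eq_neg {n : Type*} [Fintype n] {A : Matrix n n ℂ}
    (hA : Aᴴ = -A) : (trace A).re = 0 := by
  have h := congrArg (fun M => (trace M).re) hA
  simp only [trace_conjTranspose, trace_neg, Complex.star_def, Complex.conj_re,
    Complex.neg_re] at h
  linarith

lemma conjTranspose_mul_mul_conjTranspose_eq_neg {m n α : Type*} [Fintype n] [Ring α]
    [StarRing α] (H : Matrix m n α) {A : Matrix n n α} (hA : Aᴴ = -A) :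
    (H * A * Hᴴ)ᴴ = -(H * A * Hᴴ) := by
  rw [conjTranspose_mul, conjTranspose_mul, conjTranspose_conjTranspose, hA]
  simp [Matrix.mul_assoc]

def diagBlock (u v : ℂ) : Matrix (Fin 4) (Fin 4) ℂ := diagonal ![u, v, star u, star v]

def antiBlock (p q : ℂ) : Matrix (Fin 4) (Fin 4) ℂ :=
  !![0, 0, -star p, 0; 0, 0, 0, -star q; p, 0, 0, 0; 0, q, 0, 0]

lemma diagBlock_mul_conjTranspose_antiBlock (u v p q : ℂ) :
    (diagBlock u v * (antiBlock p q)ᴴ)ᴴ = -(diagBlock u v * (antiBlock p q)ᴴ) := by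
  ext i j
  fin_cases i <;> fin_cases j <;> simp [diagBlock, antiBlock, mul_apply, Fin.sum_univ_four]

lemma codeword_eq_diagBlock (s : Fin 8 → ℂ) (hs : ∀ i : Fin 8, 2 ≤ i.val → s i = 0) :
    codeword s = diagBlock ((Real.sqrt 5 : ℂ)⁻¹ * alpha * (s 0 + goldenTheta * s 1))
      ((Real.sqrt 5 : ℂ)⁻¹ * alphaBar * (s 0 + goldenThetaBar * s 1)) := by
  have h2 := hs 2 le_rfl; have h3 := hs 3 (by decide); have h4 := hs 4 (by decide)
  have h5 := hs 5 (by decide); have h6 := hs 6 (by decide); have h7 := hs 7 (by decide)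
  ext i j
  fin_cases i <;> fin_cases j <;>
    simp [codeword, diagBlock, h2, h3, h4, h5, h6, h7, mul_assoc]

lemma codeword_eq_antiBlock (t : Fin 8 → ℂ)
    (ht : ∀ i : Fin 8, i.val ≠ 4 → i.val ≠ 5 → t i = 0) :
    codeword t = antiBlock ((Real.sqrt 5 : ℂ)⁻¹ * alpha * (t 4 + goldenTheta * t 5))
      ((Real.sqrt 5 : ℂ)⁻¹ * alphaBar * (t 4 + goldenThetaBar * t 5)) := by
  have h0 := ht 0 (by decide) (by decide); have h1 := ht 1 (by decide) (by decide)
  have h2 := ht 2 (by decide) (by decide); have h3 := ht 3 (by decide) (by decide)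
  have h6 := ht 6 (by decide) (by decide); have h7 := ht 7 (by decide) (by decide)
  ext i j
  fin_cases i <;> fin_cases j <;>
    simp [codeword, antiBlock, h0, h1, h2, h3, h6, h7, mul_assoc]

lemma sOfReal_single_of_ne (j : Fin 16) {i : Fin 8} (hi : i.val ≠ j.val / 2) :
    sOfReal (Pi.single j 1) i = 0 := by
  have h0 : (⟨2 * i.val, by omega⟩ : Fin 16) ≠ j := fun h => hi (by rw [← h]; simp)
  have h1 : (⟨2 * i.val + 1, by omega⟩ : Fin 16) ≠ j := fun h => hi (by rw [← h]; simp; omega)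
  simp [sOfReal, h0, h1]

end MIMO3D

open MIMO3D

/-- The first four columns of H_eq are orthogonal to its ninth
through twelfth columns: ⟨h_j,h_k⟩ = 0 for j ∈ {1,2,3,4}, k ∈ {9,…,12}
(paper's 1-based indices; here 0-indexed: j.val < 4 and 8 ≤ k.val < 12),
for every channel matrix H. -/
theorem stmt6 (H : Matrix (Fin 2) (Fin 4) ℂ) :
    ∀ j k : Fin 16, j.val < 4 → 8 ≤ k.val → k.val < 12 →
      ⟪hcol H j, hcol H k⟫_ℝ = 0 := by
  intro j k hj hk8 hk12
  obtain ⟨u, v, hs⟩ : ∃ u v, codeword (sOfReal (Pi.single j 1)) = diagBlock u v :=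
    ⟨_, _, codeword_eq_diagBlock _ fun i hi => sOfReal_single_of_ne j (by omega)⟩
  obtain ⟨p, q, ht⟩ : ∃ p q, codeword (sOfReal (Pi.single k 1)) = antiBlock p q :=
    ⟨_, _, codeword_eq_antiBlock _ fun i hi4 hi5 => sOfReal_single_of_ne k (by omega)⟩
  rw [hcol, hcol, hs, ht, inner_tildeVec, Matrix.conjTranspose_mul, ← Matrix.mul_assoc,
    Matrix.mul_assoc H]
  exact re_trace_eq_zero_of_conjTranspose_eq_neg <|
    conjTranspose_mul_mul_conjTranspose_eq_neg H (diagBlock_mul_conjTranspose_antiBlock u v p q)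
end
end

section
/- (Theorem 2) In the QR decomposition H_eq = QR of the equivalent channel matrix of the 3D MIMO code over a quasi-static channel, the 4×4 block R_13 of R is the null matrix; that is, ⟨q_j,h_k⟩ = 0 for all j ∈ {1,2,3,4} and k ∈ {9,10,11,12}. -/
noncomputable section

open scoped InnerProductSpace

open MIMO3D

/-!
The symbols s₁, s₂ enter the codeword through `D = diag(a, b, ā, b̄)`, and s₅, s₆ through the
matrix `A` whose lower-left and upper-right 2×2 blocks are `diag(c, e)` and `-diag(c̄, ē)`.
So for j ≤ 4 and 9 ≤ k ≤ 12 the columns are `h_j = ṽ(H D)` and `h_k = ṽ(H A)`, and `A Dᴴ` is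
skew-Hermitian. As `⟪ṽ(Y), ṽ(Z)⟫ = Re tr(Yᴴ Z)`, this gives `⟪h_j, h_k⟫ = Re tr(HᴴH · A Dᴴ)`,
which vanishes because a Hermitian times a skew-Hermitian matrix has purely imaginary trace.
So h₉,…,h₁₂ are orthogonal to h₁,…,h₄, hence to q₁,…,q₄, which lie in their span.
-/

open Matrix Submodule InnerProductSpace

section GramSchmidt

variable {𝕜 E ι : Type*} [RCLike 𝕜] [NormedAddCommGroup E] [InnerProductSpace 𝕜 E]
  [LinearOrder ι] [LocallyFiniteOrderBot ι] [WellFoundedLT ι]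

theorem inner_gramSchmidtNormed_eq_zero (f : ι → E) {j : ι} {v : E}
    (h : ∀ i ≤ j, ⟪f i, v⟫_𝕜 = 0) : ⟪gramSchmidtNormed 𝕜 f j, v⟫_𝕜 = 0 := by
  have hq : gramSchmidtNormed 𝕜 f j ∈ span 𝕜 (f '' Set.Iic j) :=
    smul_mem _ _ (gramSchmidt_mem_span 𝕜 f le_rfl)
  have hortho : span 𝕜 (f '' Set.Iic j) ⟂ span 𝕜 {v} :=
    isOrtho_span.2 <| by rintro _ ⟨i, hi, rfl⟩ _ rfl; exact h i hi
  exact hortho.inner_eq hq (mem_span_singleton_self v)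

end GramSchmidt

section Trace

variable {𝕜 l m n : Type*} [RCLike 𝕜] [Fintype l] [Fintype m] [Fintype n]

theorem re_trace_mul_eq_zero_of_isHermitian {P M : Matrix n n 𝕜} (hP : P.IsHermitian)
    (hM : Mᴴ = -M) : RCLike.re (P * M).trace = 0 := by
  have hstar : star (P * M).trace = -(P * M).trace := by
    rw [← trace_conjTranspose, conjTranspose_mul, hM, hP.eq, neg_mul, trace_neg, trace_mul_comm]
  have := congrArg RCLike.re hstar
  rw [RCLike.star_def, RCLike.conj_re, map_neg] at this
  linarith

theorem re_trace_conjTranspose_mul_mul_eq_zero (H : Matrix l m 𝕜) {A B : Matrix m n 𝕜}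
    (h : (B * Aᴴ)ᴴ = -(B * Aᴴ)) : RCLike.re ((H * A)ᴴ * (H * B)).trace = 0 := by
  have hcycle : ((H * A)ᴴ * (H * B)).trace = (Hᴴ * H * (B * Aᴴ)).trace := by
    rw [conjTranspose_mul, Matrix.mul_assoc, trace_mul_comm, Matrix.mul_assoc, Matrix.mul_assoc,
      Matrix.mul_assoc]
  rw [hcycle]
  exact re_trace_mul_eq_zero_of_isHermitian (isHermitian_conjTranspose_mul_self H) h

end Trace

namespace MIMO3D

theorem inner_tildeVec_s7 (Y Z : Matrix (Fin 2) (Fin 4) ℂ) :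
    ⟪tildeVec Y, tildeVec Z⟫_ℝ = (Yᴴ * Z).trace.re := by
  simp [tildeVec, PiLp.inner_apply, Matrix.trace, Matrix.mul_apply, Fin.sum_univ_succ]
  ring

def diagShape (a b δ : ℂ) : Matrix (Fin 4) (Fin 4) ℂ :=
  δ • !![a, 0, 0, 0; 0, b, 0, 0; 0, 0, starRingEnd ℂ a, 0; 0, 0, 0, starRingEnd ℂ b]

def antidiagShape (c e δ : ℂ) : Matrix (Fin 4) (Fin 4) ℂ :=
  δ • !![0, 0, -starRingEnd ℂ c, 0; 0, 0, 0, -starRingEnd ℂ e; c, 0, 0, 0; 0, e, 0, 0]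

theorem antidiagShape_mul_conjTranspose_diagShape_skew (a b c e δ : ℂ) :
    (antidiagShape c e δ * (diagShape a b δ)ᴴ)ᴴ =
      -(antidiagShape c e δ * (diagShape a b δ)ᴴ) := by
  ext i i'
  fin_cases i <;> fin_cases i' <;>
    simp [antidiagShape, diagShape, Matrix.mul_apply, Fin.sum_univ_four, -Matrix.cons_mul] <;>
    ring

theorem sOfReal_single_apply_of_ne {j : Fin 16} {m : Fin 8} (h : m.val ≠ j.val / 2) :
    sOfReal (Pi.single j 1) m = 0 := by
  simp only [sOfReal, Pi.single_apply, Fin.ext_iff]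
  rw [if_neg (by omega), if_neg (by omega)]
  simp

theorem codeword_eq_diagShape {s : Fin 8 → ℂ} (hs : ∀ m : Fin 8, 2 ≤ m.val → s m = 0) :
    codeword s = diagShape (alpha * (s 0 + goldenTheta * s 1))
      (alphaBar * (s 0 + goldenThetaBar * s 1)) (Real.sqrt 5 : ℂ)⁻¹ := by
  ext i i'
  fin_cases i <;> fin_cases i' <;>
    simp [codeword, diagShape, hs 2, hs 3, hs 4, hs 5, hs 6, hs 7]

theorem codeword_eq_antidiagShape {s : Fin 8 → ℂ}
    (hs : ∀ m : Fin 8, m.val ≠ 4 → m.val ≠ 5 → s m = 0) :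
    codeword s = antidiagShape (alpha * (s 4 + goldenTheta * s 5))
      (alphaBar * (s 4 + goldenThetaBar * s 5)) (Real.sqrt 5 : ℂ)⁻¹ := by
  ext i i'
  fin_cases i <;> fin_cases i' <;>
    simp [codeword, antidiagShape, hs 0, hs 1, hs 2, hs 3, hs 6, hs 7]

theorem inner_hcol_eq_zero (H : Matrix (Fin 2) (Fin 4) ℂ) {j k : Fin 16} (hj : j.val < 4)
    (hk₁ : 8 ≤ k.val) (hk₂ : k.val < 12) : ⟪hcol H j, hcol H k⟫_ℝ = 0 := by
  rw [hcol, hcol, inner_tildeVec_s7,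
    codeword_eq_diagShape fun m hm => sOfReal_single_apply_of_ne (by omega),
    codeword_eq_antidiagShape fun m hm₄ hm₅ => sOfReal_single_apply_of_ne (by omega)]
  exact re_trace_conjTranspose_mul_mul_eq_zero H
    (antidiagShape_mul_conjTranspose_diagShape_skew _ _ _ _ _)

end MIMO3D

theorem stmt7_general (H : Matrix (Fin 2) (Fin 4) ℂ) :
    ∀ j k : Fin 16, j.val < 4 → 8 ≤ k.val → k.val < 12 →
      ⟪qvec H j, hcol H k⟫_ℝ = 0 := by
  intro j k hj hk₁ hk₂
  exact inner_gramSchmidtNormed_eq_zero (hcol H) fun i hi =>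
    inner_hcol_eq_zero H (lt_of_le_of_lt hi hj) hk₁ hk₂

/-- Theorem 2: The 4×4 block R₁₃ of R is the null matrix:
⟨q_j,h_k⟩ = 0 for all j ∈ {1,2,3,4} and k ∈ {9,…,12} (paper's 1-based indices;
here 0-indexed: j.val < 4 and 8 ≤ k.val < 12). -/
theorem stmt7 (H : Matrix (Fin 2) (Fin 4) ℂ) (hLI : LinearIndependent ℝ (hcol H)) :
    ∀ j k : Fin 16, j.val < 4 → 8 ≤ k.val → k.val < 12 →
      ⟪qvec H j, hcol H k⟫_ℝ = 0 :=
  stmt7_general H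
end
end
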